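/- arXiv:2011.02015 — 3 statements merged into one kernel-verified Lean document; each statement's English description precedes it below -/
import Mathlib

section
/- Let G be a finite simple graph and let C be any finite collection of pairwise vertex-disjoint cycles in G. Then there exists a matching m on the face poset F(G) whose induced oriented cycles correspond exactly to the cycles of C: each cycle of C of length ℓ yields exactly one induced oriented cycle of length 2ℓ in F(G) passing through the vertices and edges of that cycle, and m induces no other oriented cycles. In particular, the map sending an orientation-forgetting projection of the induced oriented cycles of a matching to a collection of vertex-disjoint cycles of G is surjective. -/
/-- The arc relation of the face poset of a finite abstract simplicial complex `X`
(given as a finite family of finite faces): an arc from `σ` down to `τ` whenever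
`τ` is a codimension-one face of `σ`. -/
def FaceArc {V : Type*} (X : Finset (Finset V)) (σ τ : Finset V) : Prop :=
  σ ∈ X ∧ τ ∈ X ∧ τ ⊂ σ ∧ τ.card + 1 = σ.card

/-- The arc relation of the face poset of a simple graph `G`, regarded as a
1-dimensional simplicial complex: an arc from each edge-face `{u, v}` down to
each of its endpoint vertex-faces. -/
def GraphArc {V : Type*} [DecidableEq V] (G : SimpleGraph V) (σ τ : Finset V) : Prop :=
  ∃ u v : V, G.Adj u v ∧ σ = {u, v} ∧ (τ = {u} ∨ τ = {v})

/-- A matching on the digraph with arc relation `A`: a finite set of arcs,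
no two of which share an endpoint. -/
def IsMatching {α : Type*} (A : α → α → Prop) (m : Finset (α × α)) : Prop :=
  (∀ p ∈ m, A p.1 p.2) ∧
    ∀ p ∈ m, ∀ q ∈ m, p ≠ q →
      p.1 ≠ q.1 ∧ p.1 ≠ q.2 ∧ p.2 ≠ q.1 ∧ p.2 ≠ q.2

/-- The arc relation of the digraph obtained from the digraph with arc relation `A`
by reversing the arcs belonging to `m`. -/
def MStep {α : Type*} (A : α → α → Prop) (m : Finset (α × α)) (a b : α) : Prop :=
  (A a b ∧ (a, b) ∉ m) ∨ (A b a ∧ (b, a) ∈ m)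

/-- `IsCycleList R l` says the nonempty list `l` of pairwise distinct vertices is a
directed cycle of the digraph with arc relation `R` (consecutive steps, closing up). -/
def IsCycleList {α : Type*} (R : α → α → Prop) : List α → Prop
  | [] => False
  | a :: l => (a :: l).Nodup ∧ List.Chain R a (l ++ [a])

/-- The set of oriented cycles induced by the matching `m` on the digraph with arc
relation `A` (as lists of vertices; rotated lists represent the same cycle). -/
def cyclesOf {α : Type*} (A : α → α → Prop) (m : Finset (α × α)) : Set (List α) :=
  {l | IsCycleList (MStep A m) l}

/-- `numCycles A m` is `J(m)`, the number of oriented cycles induced by `m`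
(cycle lists counted up to rotation). -/
noncomputable def numCycles {α : Type*} (A : α → α → Prop) (m : Finset (α × α)) : ℕ :=
  (Quotient.mk (List.IsRotated.setoid α) '' cyclesOf A m).ncard

/-!
Match each edge face `{x, y}` of a given cycle, traversed as the dart `(x, y)`, with its tail
`{x}`. Reversing these arcs turns a cycle `x₁ x₂ ⋯ x_ℓ` into the oriented cycle
`{x₁} → {x₁, x₂} → {x₂} → ⋯ → {x_ℓ, x₁} → {x₁}` of length `2ℓ`; disjointness of the cycles is
what makes the arcs a matching.

Conversely, for any matching on `F(G)`, a face with an in-arc in `F_m(G)` has at most one out-arc: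
a vertex face can only leave along its reversed matching arc, and an edge face entered from its
matched endpoint can only leave to the other endpoint. Hence two oriented cycles through a common
face agree up to rotation. Every oriented cycle passes through the lower end of a matching arc
(two consecutive down-steps are impossible), so it is one of the cycles constructed above.
-/

section CycleList

variable {α : Type*} {R : α → α → Prop}

theorem isCycleList_iff {c : List α} :
    IsCycleList R c ↔ c ≠ [] ∧ c.Nodup ∧ Cycle.Chain R (c : Cycle α) := by
  cases c with
  | nil => simp [IsCycleList]
  | cons a l =>
    exact ⟨fun ⟨hnd, hch⟩ => ⟨List.cons_ne_nil a l, hnd, (Cycle.chain_coe_cons R a l).mpr hch⟩,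
      fun ⟨_, hnd, hch⟩ => ⟨hnd, (Cycle.chain_coe_cons R a l).mp hch⟩⟩

theorem IsCycleList.of_isRotated {c c' : List α} (h : IsCycleList R c) (hr : c ~r c') :
    IsCycleList R c' := by
  obtain ⟨hne, hnd, hch⟩ := isCycleList_iff.mp h
  exact isCycleList_iff.mpr ⟨fun h' => hne (List.isRotated_nil_iff.mp (h' ▸ hr)),
    hr.nodup_iff.mp hnd, Cycle.coe_eq_coe.mpr hr ▸ hch⟩

theorem List.exists_isRotated_cons_of_mem {c : List α} {x : α} (hx : x ∈ c) :
    ∃ t, c ~r x :: t := by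
  obtain ⟨s, t, rfl⟩ := List.append_of_mem hx
  exact ⟨t ++ s, by simpa using (List.isRotated_append : s ++ x :: t ~r (x :: t) ++ s)⟩

theorem IsCycleList.exists_rel_of_mem {c : List α} {x : α} (h : IsCycleList R c) (hx : x ∈ c) :
    ∃ y ∈ c, R x y := by
  obtain ⟨t, hr⟩ := List.exists_isRotated_cons_of_mem hx
  obtain ⟨-, hch⟩ := h.of_isRotated hr
  cases t with
  | nil => exact ⟨x, hx, List.isChain_pair.mp hch⟩
  | cons y t => exact ⟨y, hr.mem_iff.mpr (by simp), (List.isChain_cons_cons.mp hch).1⟩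

theorem IsCycleList.exists_rel_head {a : α} {l : List α} (h : IsCycleList R (a :: l)) :
    ∃ p, R p a := by
  have hch : (a :: l ++ [a]).IsChain R := h.2
  rw [List.isChain_append] at hch
  exact ⟨_, hch.2.2 _ (List.getLast?_eq_some_getLast (List.cons_ne_nil a l)) a rfl⟩

theorem List.IsChain.prefix_or_prefix (hR : ∀ p x y y', R p x → R x y → R x y' → y = y')
    {p a : α} {L L' : List α} (hp : R p a) (h : (a :: L).IsChain R) (h' : (a :: L').IsChain R) :
    L <+: L' ∨ L' <+: L := by
  induction L generalizing p a L' with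
  | nil => exact Or.inl List.nil_prefix
  | cons b L ih =>
    cases L' with
    | nil => exact Or.inr List.nil_prefix
    | cons b' L' =>
      rw [List.isChain_cons_cons] at h h'
      obtain rfl := hR p a b b' hp h.1 h'.1
      simpa only [List.cons_prefix_cons, true_and] using ih h.1 h.2 h'.2

theorem IsCycleList.eq_of_prefix {a : α} {l l' : List α} (h' : IsCycleList R (a :: l'))
    (hpre : l ++ [a] <+: l' ++ [a]) : l = l' := by
  obtain ⟨t, ht⟩ := hpre
  rcases List.eq_nil_or_concat t with rfl | ⟨t, z, rfl⟩
  · simpa using ht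
  · rw [List.concat_eq_append, ← List.append_assoc] at ht
    have ha : a ∈ l' := by rw [← (List.append_inj' ht rfl).1]; simp
    exact absurd ha (List.nodup_cons.mp h'.1).1

theorem IsCycleList.tail_eq (hR : ∀ p x y y', R p x → R x y → R x y' → y = y') {a : α}
    {l l' : List α} (h : IsCycleList R (a :: l)) (h' : IsCycleList R (a :: l')) : l = l' := by
  obtain ⟨p, hp⟩ := h.exists_rel_head
  rcases List.IsChain.prefix_or_prefix hR hp h.2 h'.2 with hpre | hpre
  · exact h'.eq_of_prefix hpre
  · exact (h.eq_of_prefix hpre).symm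

theorem IsCycleList.isRotated_of_mem (hR : ∀ p x y y', R p x → R x y → R x y' → y = y')
    {c c' : List α} {x : α} (h : IsCycleList R c) (h' : IsCycleList R c') (hx : x ∈ c)
    (hx' : x ∈ c') : c ~r c' := by
  obtain ⟨t, hr⟩ := List.exists_isRotated_cons_of_mem hx
  obtain ⟨t', hr'⟩ := List.exists_isRotated_cons_of_mem hx'
  obtain rfl := (h.of_isRotated hr).tail_eq hR (h'.of_isRotated hr')
  exact hr.trans hr'.symm

end CycleList

section FacePoset

variable {V : Type*} [DecidableEq V] {G : SimpleGraph V}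

theorem GraphArc.card_fst {σ τ : Finset V} (h : GraphArc G σ τ) : σ.card = 2 := by
  obtain ⟨u, v, huv, rfl, -⟩ := h
  exact Finset.card_pair huv.ne

theorem GraphArc.card_snd {σ τ : Finset V} (h : GraphArc G σ τ) : τ.card = 1 := by
  obtain ⟨u, v, -, -, rfl | rfl⟩ := h <;> rfl

theorem GraphArc.exists_eq_singleton {σ τ : Finset V} (h : GraphArc G σ τ) :
    ∃ x ∈ σ, τ = {x} := by
  obtain ⟨u, v, -, rfl, rfl | rfl⟩ := h <;> simp

variable {m : Finset (Finset V × Finset V)}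

theorem mstep_graphArc_mem_or_mem {a b c : Finset V} (hab : MStep (GraphArc G) m a b)
    (hbc : MStep (GraphArc G) m b c) : (b, a) ∈ m ∨ (c, b) ∈ m := by
  rcases hab with ⟨hab, -⟩ | ⟨-, hba⟩
  · rcases hbc with ⟨hbc, -⟩ | ⟨-, hcb⟩
    · have := hab.card_snd.symm.trans hbc.card_fst
      omega
    · exact Or.inr hcb
  · exact Or.inl hba

theorem IsCycleList.exists_snd_mem_of_graphArc {γ : List (Finset V)}
    (h : IsCycleList (MStep (GraphArc G) m) γ) : ∃ p ∈ m, p.2 ∈ γ := by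
  obtain ⟨a, ha⟩ : ∃ a, a ∈ γ := by
    cases γ with
    | nil => exact h.elim
    | cons a l => exact ⟨a, List.mem_cons_self⟩
  obtain ⟨b, hb, hab⟩ := h.exists_rel_of_mem ha
  obtain ⟨c, -, hbc⟩ := h.exists_rel_of_mem hb
  rcases mstep_graphArc_mem_or_mem hab hbc with hba | hcb
  · exact ⟨_, hba, ha⟩
  · exact ⟨_, hcb, hb⟩

theorem Finset.eq_of_ne_of_card_eq_two {s : Finset V} {a b c : V} (hs : s.card = 2) (ha : a ∈ s)
    (hb : b ∈ s) (hc : c ∈ s) (hba : b ≠ a) (hca : c ≠ a) : b = c := by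
  obtain ⟨x, y, -, rfl⟩ := Finset.card_eq_two.mp hs
  simp only [Finset.mem_insert, Finset.mem_singleton] at ha hb hc
  grind

theorem IsMatching.mstep_graphArc_eq (hm : IsMatching (GraphArc G) m) {x y z z' : Finset V}
    (hxy : MStep (GraphArc G) m x y) (hyz : MStep (GraphArc G) m y z)
    (hyz' : MStep (GraphArc G) m y z') : z = z' := by
  rcases hyz with ⟨hyz, hnm⟩ | ⟨hzy, hzy_mem⟩
  · have hy := hyz.card_fst
    obtain ⟨hyx, hyx_mem⟩ : GraphArc G y x ∧ (y, x) ∈ m := by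
      rcases hxy with ⟨hxy, -⟩ | hyx
      · have := hxy.card_snd; omega
      · exact hyx
    obtain ⟨hyz', hnm'⟩ : GraphArc G y z' ∧ (y, z') ∉ m := by
      rcases hyz' with hyz' | ⟨hzy', -⟩
      · exact hyz'
      · have := hzy'.card_snd; omega
    obtain ⟨a, ha, rfl⟩ := hyx.exists_eq_singleton
    obtain ⟨b, hb, rfl⟩ := hyz.exists_eq_singleton
    obtain ⟨c, hc, rfl⟩ := hyz'.exists_eq_singleton
    rw [Finset.eq_of_ne_of_card_eq_two hy ha hb hc (by rintro rfl; exact hnm hyx_mem)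
      (by rintro rfl; exact hnm' hyx_mem)]
  · have hy := hzy.card_snd
    have hz'y_mem : (z', y) ∈ m := by
      rcases hyz' with ⟨hyz', -⟩ | ⟨-, hz'y⟩
      · have := hyz'.card_fst; omega
      · exact hz'y
    by_contra hne
    exact (hm.2 _ hzy_mem _ hz'y_mem (by simpa using hne)).2.2.2 rfl

theorem IsMatching.isRotated_of_mem_of_mem (hm : IsMatching (GraphArc G) m)
    {γ γ' : List (Finset V)} {σ : Finset V} (h : γ ∈ cyclesOf (GraphArc G) m)
    (h' : γ' ∈ cyclesOf (GraphArc G) m) (hσ : σ ∈ γ) (hσ' : σ ∈ γ') : γ ~r γ' :=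
  IsCycleList.isRotated_of_mem (fun _ _ _ _ => hm.mstep_graphArc_eq) h h' hσ hσ'

end FacePoset

section DartMatching

open SimpleGraph

variable {V : Type*} [DecidableEq V] {G : SimpleGraph V}

theorem Finset.singleton_ne_pair {a b c : V} (h : b ≠ c) : ({a} : Finset V) ≠ {b, c} := by
  intro h'
  have := congrArg Finset.card h'
  rw [Finset.card_singleton, Finset.card_pair h] at this
  omega

theorem SimpleGraph.Dart.pair_ne_pair {d d' : G.Dart} (hne : d ≠ d') (hsymm : d ≠ d'.symm) :
    ({d.fst, d.snd} : Finset V) ≠ {d'.fst, d'.snd} := by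
  intro h
  have hedge : d.edge = d'.edge := by
    have := congrArg (fun s : Finset V => (s : Set V)) h
    simp only [Finset.coe_insert, Finset.coe_singleton, Set.pair_eq_pair_iff] at this
    exact Sym2.eq_iff.mpr this
  rcases (dart_edge_eq_iff d d').mp hedge with h | h
  exacts [hne h, hsymm h]

def dartMatching (D : Finset G.Dart) : Finset (Finset V × Finset V) :=
  D.image fun d => ({d.fst, d.snd}, {d.fst})

variable {D : Finset G.Dart}

theorem isMatching_dartMatching (hfst : Set.InjOn (·.fst) (D : Set G.Dart))
    (hsymm : ∀ d ∈ D, d.symm ∉ D) : IsMatching (GraphArc G) (dartMatching D) := by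
  refine ⟨?_, ?_⟩
  · simp only [dartMatching, Finset.forall_mem_image]
    exact fun d _ => ⟨d.fst, d.snd, d.adj, rfl, Or.inl rfl⟩
  · simp only [dartMatching, Finset.forall_mem_image]
    intro d hd d' hd' hne
    have hdd' : d ≠ d' := by rintro rfl; exact hne rfl
    refine ⟨Dart.pair_ne_pair hdd' ?_, ?_, ?_, ?_⟩
    · rintro rfl; exact hsymm _ hd' hd
    · exact fun h => Finset.singleton_ne_pair d.fst_ne_snd h.symm
    · exact Finset.singleton_ne_pair d'.fst_ne_snd
    · exact fun h => hdd' (hfst hd hd' (Finset.singleton_injective h))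

theorem mstep_dartMatching_fst {d : G.Dart} (hd : d ∈ D) :
    MStep (GraphArc G) (dartMatching D) {d.fst} {d.fst, d.snd} :=
  Or.inr ⟨⟨d.fst, d.snd, d.adj, rfl, Or.inl rfl⟩, Finset.mem_image_of_mem _ hd⟩

theorem IsMatching.mstep_dartMatching_snd (hm : IsMatching (GraphArc G) (dartMatching D))
    {d : G.Dart} (hd : d ∈ D) : MStep (GraphArc G) (dartMatching D) {d.fst, d.snd} {d.snd} := by
  refine Or.inl ⟨⟨d.fst, d.snd, d.adj, rfl, Or.inr rfl⟩, fun h => ?_⟩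
  have hne : (({d.fst, d.snd} : Finset V), ({d.snd} : Finset V)) ≠ ({d.fst, d.snd}, {d.fst}) := by
    simp [d.snd_ne_fst]
  exact (hm.2 _ h _ (Finset.mem_image_of_mem _ hd) hne).1 rfl

end DartMatching

namespace SimpleGraph.Walk

variable {V : Type*} {G : SimpleGraph V}

theorem IsTrail.symm_notMem_darts {u v : V} {p : G.Walk u v} (hp : p.IsTrail) {d : G.Dart}
    (hd : d ∈ p.darts) : d.symm ∉ p.darts := fun hd' =>
  d.symm_ne (List.inj_on_of_nodup_map hp.edges_nodup hd' hd d.edge_symm)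

theorem IsCycle.injOn_fst {u : V} {p : G.Walk u u} (hp : p.IsCycle) :
    Set.InjOn (·.fst) {d | d ∈ p.darts} := fun _ hd _ hd' =>
  List.inj_on_of_nodup_map (p.map_fst_darts ▸ hp.nodup_dropLast_support) hd hd'

theorem mem_dropLast_support_of_not_nil {u x : V} {p : G.Walk u u} (hp : ¬p.Nil)
    (hx : x ∈ p.support) : x ∈ p.support.dropLast :=
  p.tail_support_perm_dropLast_support.mem_iff.mp <|
    (p.mem_support_iff.mp hx).elim (fun h => h ▸ end_mem_tail_support hp) id

variable [DecidableEq V]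

def faces {u v : V} (p : G.Walk u v) : List (Finset V) :=
  p.darts.flatMap fun d => [{d.fst}, {d.fst, d.snd}]

theorem length_faces {u v : V} (p : G.Walk u v) : p.faces.length = 2 * p.length := by
  induction p with
  | nil => rfl
  | cons h p ih => simp [faces] at ih ⊢; omega

theorem mem_faces {u v : V} {p : G.Walk u v} {σ : Finset V} :
    σ ∈ p.faces ↔ ∃ d ∈ p.darts, σ = {d.fst} ∨ σ = {d.fst, d.snd} := by
  simp [faces]

theorem isChain_faces_append {R : Finset V → Finset V → Prop} {u v : V} (p : G.Walk u v)
    (hR : ∀ d ∈ p.darts, R {d.fst} {d.fst, d.snd} ∧ R {d.fst, d.snd} {d.snd}) :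
    (p.faces ++ [{v}]).IsChain R := by
  induction p with
  | nil => exact List.IsChain.singleton _
  | @cons u w v h p ih =>
    obtain ⟨hu, hw⟩ := hR ⟨(u, w), h⟩ (by simp)
    have ih := ih fun d hd => hR d (by simp [hd])
    have hhead : ∃ t, p.faces ++ [{v}] = {w} :: t := by
      cases p with
      | nil => exact ⟨[], rfl⟩
      | cons => exact ⟨_, rfl⟩
    obtain ⟨t, ht⟩ := hhead
    change ({u} :: {u, w} :: (p.faces ++ [{v}])).IsChain R
    rw [ht] at ih ⊢
    exact .cons_cons hu (.cons_cons hw ih)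

theorem IsCycle.nodup_faces {u : V} {p : G.Walk u u} (hp : p.IsCycle) : p.faces.Nodup := by
  refine List.nodup_flatMap.mpr ⟨fun d _ => ?_, ?_⟩
  · simp [Finset.singleton_ne_pair d.fst_ne_snd]
  · refine hp.edges_nodup.of_map _ |>.pairwise_of_forall_ne fun d hd d' hd' hne => ?_
    simp only [List.disjoint_iff_ne, List.mem_cons, List.not_mem_nil, or_false,
      forall_eq_or_imp, forall_eq]
    refine ⟨⟨fun h => hne (hp.injOn_fst hd hd' (Finset.singleton_injective h)),
      Finset.singleton_ne_pair d'.fst_ne_snd⟩,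
      fun h => Finset.singleton_ne_pair d.fst_ne_snd h.symm,
      Dart.pair_ne_pair hne fun h => hp.isTrail.symm_notMem_darts hd' (h ▸ hd)⟩

theorem IsCycle.isCycleList_faces {R : Finset V → Finset V → Prop} {u : V} {p : G.Walk u u}
    (hp : p.IsCycle)
    (hR : ∀ d ∈ p.darts, R {d.fst} {d.fst, d.snd} ∧ R {d.fst, d.snd} {d.snd}) :
    IsCycleList R p.faces := by
  cases p with
  | nil => exact (hp.not_nil .nil).elim
  | cons h q => exact ⟨hp.nodup_faces, isChain_faces_append _ hR⟩

theorem IsCycle.mem_faces_iff {u : V} {p : G.Walk u u} (hp : p.IsCycle) {σ : Finset V} :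
    σ ∈ p.faces ↔
      (∃ x ∈ p.support, σ = {x}) ∨ ∃ x y : V, s(x, y) ∈ p.edges ∧ σ = {x, y} := by
  rw [mem_faces]
  constructor
  · rintro ⟨d, hd, rfl | rfl⟩
    · exact Or.inl ⟨d.fst, p.dart_fst_mem_support_of_mem_darts hd, rfl⟩
    · exact Or.inr ⟨d.fst, d.snd, List.mem_map_of_mem hd, rfl⟩
  · rintro (⟨x, hx, rfl⟩ | ⟨x, y, hxy, rfl⟩)
    · have hx := mem_dropLast_support_of_not_nil hp.not_nil hx
      rw [← map_fst_darts] at hx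
      obtain ⟨d, hd, rfl⟩ := List.mem_map.mp hx
      exact ⟨d, hd, Or.inl rfl⟩
    · obtain ⟨d, hd, hde⟩ := List.mem_map.mp hxy
      refine ⟨d, hd, Or.inr ?_⟩
      rw [← Sym2.toFinset_mk_eq, ← Sym2.toFinset_mk_eq]
      exact congrArg Sym2.toFinset hde.symm

theorem IsCycle.singleton_mem_faces_iff {u x : V} {p : G.Walk u u} (hp : p.IsCycle) :
    {x} ∈ p.faces ↔ x ∈ p.support := by
  rw [hp.mem_faces_iff]
  constructor
  · rintro (⟨y, hy, h⟩ | ⟨a, b, hab, h⟩)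
    · exact Finset.singleton_injective h ▸ hy
    · exact absurd h (Finset.singleton_ne_pair (p.adj_of_mem_edges hab).ne)
  · exact fun hx => Or.inl ⟨x, hx, rfl⟩

end SimpleGraph.Walk

theorem numCycles_eq_card {α ι : Type*} {A : α → α → Prop} {m : Finset (α × α)}
    (c : ι → List α) (hc : ∀ i, c i ∈ cyclesOf A m)
    (hcover : ∀ γ ∈ cyclesOf A m, ∃ i, γ ~r c i) (hinj : ∀ i j, c i ~r c j → i = j) :
    numCycles A m = Nat.card ι := by
  have himage : Quotient.mk (List.IsRotated.setoid α) '' cyclesOf A m =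
      Set.range fun i => Quotient.mk _ (c i) := by
    ext q
    constructor
    · rintro ⟨γ, hγ, rfl⟩
      obtain ⟨i, hr⟩ := hcover γ hγ
      exact ⟨i, (Quotient.sound hr).symm⟩
    · rintro ⟨i, rfl⟩
      exact ⟨c i, hc i, rfl⟩
  rw [numCycles, himage, Set.ncard_range_of_injective]
  exact fun i j h => hinj i j (Quotient.exact h)

section CycleFamily

variable {V : Type*} {G : SimpleGraph V} {k : ℕ} {v : Fin k → V}

theorem eq_of_mem_support_of_mem_support {w : ∀ i, G.Walk (v i) (v i)}
    (hdisj : ∀ i j, i ≠ j → ∀ x : V, x ∈ (w i).support → x ∉ (w j).support)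
    {i j : Fin k} {x : V} (hi : x ∈ (w i).support) (hj : x ∈ (w j).support) : i = j :=
  by_contra fun hne => hdisj i j hne x hi hj

variable [DecidableEq V]

def cycleDarts (w : ∀ i, G.Walk (v i) (v i)) : Finset G.Dart :=
  Finset.univ.biUnion fun i => (w i).darts.toFinset

variable {w : ∀ i, G.Walk (v i) (v i)}

theorem mem_cycleDarts {d : G.Dart} : d ∈ cycleDarts w ↔ ∃ i, d ∈ (w i).darts := by
  simp [cycleDarts]

theorem injOn_fst_cycleDarts (hc : ∀ i, (w i).IsCycle)
    (hdisj : ∀ i j, i ≠ j → ∀ x : V, x ∈ (w i).support → x ∉ (w j).support) :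
    Set.InjOn (·.fst) (cycleDarts w : Set G.Dart) := by
  intro d hd d' hd' (h : d.fst = d'.fst)
  obtain ⟨i, hi⟩ := mem_cycleDarts.mp hd
  obtain ⟨j, hj⟩ := mem_cycleDarts.mp hd'
  obtain rfl := eq_of_mem_support_of_mem_support hdisj
    ((w i).dart_fst_mem_support_of_mem_darts hi) (h ▸ (w j).dart_fst_mem_support_of_mem_darts hj)
  exact (hc i).injOn_fst hi hj h

theorem symm_notMem_cycleDarts (hc : ∀ i, (w i).IsCycle)
    (hdisj : ∀ i j, i ≠ j → ∀ x : V, x ∈ (w i).support → x ∉ (w j).support)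
    {d : G.Dart} (hd : d ∈ cycleDarts w) : d.symm ∉ cycleDarts w := by
  intro hd'
  obtain ⟨i, hi⟩ := mem_cycleDarts.mp hd
  obtain ⟨j, hj⟩ := mem_cycleDarts.mp hd'
  obtain rfl := eq_of_mem_support_of_mem_support hdisj
    ((w i).dart_fst_mem_support_of_mem_darts hi) ((w j).dart_snd_mem_support_of_mem_darts hj)
  exact (hc i).isTrail.symm_notMem_darts hi hj

end CycleFamily

theorem matching_realizing_vertex_disjoint_cycles_general {V : Type*} [DecidableEq V]
    (G : SimpleGraph V) (k : ℕ) (v : Fin k → V) (w : ∀ i, G.Walk (v i) (v i))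
    (hc : ∀ i, (w i).IsCycle)
    (hd : ∀ i j, i ≠ j → ∀ x : V, x ∈ (w i).support → x ∉ (w j).support) :
    ∃ m : Finset (Finset V × Finset V), IsMatching (GraphArc G) m ∧
      (∀ i, ∃ γ ∈ cyclesOf (GraphArc G) m,
        γ.length = 2 * (w i).length ∧
        (∀ σ : Finset V, σ ∈ γ ↔
          ((∃ x ∈ (w i).support, σ = {x}) ∨
            (∃ x y : V, s(x, y) ∈ (w i).edges ∧ σ = {x, y})))) ∧
      (∀ γ ∈ cyclesOf (GraphArc G) m, ∃ i, ∀ σ ∈ γ,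
        ((∃ x ∈ (w i).support, σ = {x}) ∨
          (∃ x y : V, s(x, y) ∈ (w i).edges ∧ σ = {x, y}))) ∧
      numCycles (GraphArc G) m = k := by
  set m := dartMatching (cycleDarts w)
  have hm : IsMatching (GraphArc G) m :=
    isMatching_dartMatching (injOn_fst_cycleDarts hc hd) fun _ => symm_notMem_cycleDarts hc hd
  have hcyc : ∀ i, (w i).faces ∈ cyclesOf (GraphArc G) m := fun i =>
    (hc i).isCycleList_faces fun d hdi =>
      have hD : d ∈ cycleDarts w := mem_cycleDarts.mpr ⟨i, hdi⟩
      ⟨mstep_dartMatching_fst hD, hm.mstep_dartMatching_snd hD⟩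
  have hcover : ∀ γ ∈ cyclesOf (GraphArc G) m, ∃ i, γ ~r (w i).faces := by
    intro γ hγ
    obtain ⟨_, hp, hτ⟩ := IsCycleList.exists_snd_mem_of_graphArc hγ
    obtain ⟨d, hD, rfl⟩ := Finset.mem_image.mp hp
    obtain ⟨i, hdi⟩ := mem_cycleDarts.mp hD
    exact ⟨i, hm.isRotated_of_mem_of_mem hγ (hcyc i) hτ
      (SimpleGraph.Walk.mem_faces.mpr ⟨d, hdi, Or.inl rfl⟩)⟩
  refine ⟨m, hm, fun i => ⟨_, hcyc i, (w i).length_faces, fun σ => (hc i).mem_faces_iff⟩,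
    fun γ hγ => ?_, ?_⟩
  · obtain ⟨i, hr⟩ := hcover γ hγ
    exact ⟨i, fun σ hσ => (hc i).mem_faces_iff.mp (hr.mem_iff.mp hσ)⟩
  · rw [numCycles_eq_card _ hcyc hcover, Nat.card_fin]
    intro i j hr
    have hvi : {v i} ∈ (w j).faces :=
      hr.mem_iff.mp ((hc i).singleton_mem_faces_iff.mpr (w i).start_mem_support)
    exact eq_of_mem_support_of_mem_support hd (w i).start_mem_support
      ((hc j).singleton_mem_faces_iff.mp hvi)

/-- given any finite collection of pairwise vertex-disjoint cycles
`γ_1, …, γ_k` in a simple graph `G`, there is a matching `m` on the face poset `F(G)`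
whose induced oriented cycles correspond exactly to the given cycles: for each `i`
there is an induced oriented cycle of length `2·ℓ(γ_i)` traversing precisely the
vertex- and edge-faces of `γ_i`, every induced oriented cycle is supported on some
`γ_i`, and `J(m) = k`.  In particular the orientation-forgetting projection to
collections of vertex-disjoint cycles of `G` is surjective. -/
theorem matching_realizing_vertex_disjoint_cycles {V : Type*} [Fintype V] [DecidableEq V]
    (G : SimpleGraph V) (k : ℕ) (v : Fin k → V) (w : ∀ i, G.Walk (v i) (v i))
    (hc : ∀ i, (w i).IsCycle)
    (hd : ∀ i j, i ≠ j → ∀ x : V, x ∈ (w i).support → x ∉ (w j).support) :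
    ∃ m : Finset (Finset V × Finset V), IsMatching (GraphArc G) m ∧
      (∀ i, ∃ γ ∈ cyclesOf (GraphArc G) m,
        γ.length = 2 * (w i).length ∧
        (∀ σ : Finset V, σ ∈ γ ↔
          ((∃ x ∈ (w i).support, σ = {x}) ∨
            (∃ x y : V, s(x, y) ∈ (w i).edges ∧ σ = {x, y})))) ∧
      (∀ γ ∈ cyclesOf (GraphArc G) m, ∃ i, ∀ σ ∈ γ,
        ((∃ x ∈ (w i).support, σ = {x}) ∨
          (∃ x y : V, s(x, y) ∈ (w i).edges ∧ σ = {x, y}))) ∧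
      numCycles (GraphArc G) m = k :=
  matching_realizing_vertex_disjoint_cycles_general G k v w hc hd
end

section
/- Let G be a finite simple graph and let m be a matching on F(G) whose induced oriented cycles project to the pairwise vertex-disjoint cycles γ_1, …, γ_j of G. Then the number of arcs of m is at least ℓ(γ_1) + ⋯ + ℓ(γ_j), where ℓ(γ) denotes the length of the cycle γ. In particular, since every cycle in a simple graph has length at least 3, every matching m on F(G) with J(m) = j has at least 3j arcs; equivalently, the simplices of the matching complex M(G) in filtration degree j have dimension at least 3j − 1. -/
open Finset Function

section Cycles

variable {α : Type*} {R : α → α → Prop} {γ γ' : List α}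

theorem isCycleList_iff_cycle : IsCycleList R γ ↔ γ ≠ [] ∧ γ.Nodup ∧ (γ : Cycle α).Chain R := by
  cases γ with
  | nil => simp [IsCycleList]
  | cons a l =>
    rw [Cycle.chain_coe_cons]
    exact ⟨fun h => ⟨List.cons_ne_nil _ _, h⟩, fun h => h.2⟩

theorem IsCycleList.of_isRotated_s11 (h : IsCycleList R γ) (hr : γ ~r γ') : IsCycleList R γ' := by
  rw [isCycleList_iff_cycle] at h ⊢
  exact ⟨fun h' => h.1 (List.isRotated_nil_iff.1 (h' ▸ hr)), hr.nodup_iff.1 h.2.1,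
    Cycle.coe_eq_coe.2 hr ▸ h.2.2⟩

theorem List.exists_isRotated_cons {x : α} (hx : x ∈ γ) : ∃ l, γ ~r x :: l := by
  obtain ⟨s, t, rfl⟩ := List.append_of_mem hx
  exact ⟨t ++ s, List.isRotated_append⟩

theorem IsCycleList.exists_mem_rel (h : IsCycleList R γ) {x : α} (hx : x ∈ γ) :
    ∃ y ∈ γ, R y x := by
  obtain ⟨l, hr⟩ := List.exists_isRotated_cons hx
  obtain ⟨-, hch⟩ := h.of_isRotated_s11 hr
  have hch : ((x :: l) ++ [x]).IsChain R := hch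
  exact ⟨_, hr.mem_iff.2 (List.getLast_mem _),
    hch.rel_getLast_head_of_append (List.cons_ne_nil _ _) (List.cons_ne_nil _ _)⟩

theorem List.eq_of_isChain_cons_append_singleton {z : α} :
    ∀ {x : α} {l l' : List α}, (∀ a ∈ x :: l, ∀ b c, R a b → R a c → b = c) →
      IsChain R (x :: (l ++ [z])) → IsChain R (x :: (l' ++ [z])) → z ∉ l → z ∉ l' → l = l'
  | _, [], [], _, _, _, _, _ => rfl
  | x, [], b :: l', hdet, h, h', _, hz' => by
    simp only [List.nil_append, List.cons_append, List.isChain_cons_cons,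
      List.isChain_singleton, and_true] at h h'
    exact absurd (hdet x List.mem_cons_self _ _ h h'.1 ▸ List.mem_cons_self) hz'
  | x, b :: l, [], hdet, h, h', hz, _ => by
    simp only [List.nil_append, List.cons_append, List.isChain_cons_cons,
      List.isChain_singleton, and_true] at h h'
    exact absurd (hdet x List.mem_cons_self _ _ h' h.1 ▸ List.mem_cons_self) hz
  | x, b :: l, b' :: l', hdet, h, h', hz, hz' => by
    simp only [List.cons_append, List.isChain_cons_cons] at h h'
    obtain rfl := hdet x List.mem_cons_self _ _ h.1 h'.1
    rw [eq_of_isChain_cons_append_singleton (fun a ha => hdet a (List.mem_cons_of_mem _ ha))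
      h.2 h'.2 (fun h => hz (List.mem_cons_of_mem _ h)) (fun h => hz' (List.mem_cons_of_mem _ h))]

theorem IsCycleList.isRotated_of_mem_s11 (h : IsCycleList R γ)
    (hdet : ∀ a ∈ γ, ∀ b c, R a b → R a c → b = c) (h' : IsCycleList R γ') {x : α}
    (hx : x ∈ γ) (hx' : x ∈ γ') : γ ~r γ' := by
  obtain ⟨l, hr⟩ := List.exists_isRotated_cons hx
  obtain ⟨l', hr'⟩ := List.exists_isRotated_cons hx'
  obtain ⟨hnd, hch⟩ := h.of_isRotated_s11 hr
  obtain ⟨hnd', hch'⟩ := h'.of_isRotated_s11 hr'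
  obtain rfl : l = l' := List.eq_of_isChain_cons_append_singleton
    (fun a ha => hdet a (hr.mem_iff.2 ha)) hch hch' (List.nodup_cons.1 hnd).1
    (List.nodup_cons.1 hnd').1
  exact hr.trans hr'.symm

end Cycles

theorem mul_ncard_le_card_of_pairwiseDisjoint {ι β : Type*} {Q : Set ι} {M : Finset β}
    {S : ι → Finset β} {n : ℕ} (hn : 0 < n) (hS : ∀ q ∈ Q, n ≤ #(S q))
    (hSM : ∀ q ∈ Q, S q ⊆ M) (hdisj : Q.PairwiseDisjoint S) : n * Q.ncard ≤ #M := by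
  classical
  have hinj : Q.InjOn S := fun q hq q' hq' h => hdisj.elim hq hq' fun hd => by
    have := hS q hq
    rw [h, disjoint_self_iff_empty] at hd
    rw [h, hd, card_empty] at this
    omega
  have hfin : Q.Finite := Set.Finite.of_finite_image
    (M.powerset.finite_toSet.subset (by rintro _ ⟨q, hq, rfl⟩; simpa using hSM q hq)) hinj
  obtain ⟨F, rfl⟩ := hfin.exists_finset_coe
  calc n * (F : Set ι).ncard = ∑ _q ∈ F, n := by simp [mul_comm]
    _ ≤ ∑ q ∈ F, #(S q) := sum_le_sum hS
    _ = #(F.biUnion S) := (card_biUnion hdisj).symm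
    _ ≤ #M := card_le_card (biUnion_subset.2 hSM)

theorem Sym2.toFinset_injective {α : Type*} [DecidableEq α] :
    Function.Injective (Sym2.toFinset : Sym2 α → Finset α) :=
  fun _ _ h => Sym2.ext fun x => by rw [← Sym2.mem_toFinset, h, Sym2.mem_toFinset]

theorem IsMatching.eq_of_snd_eq {α : Type*} {A : α → α → Prop} {m : Finset (α × α)}
    (hm : IsMatching A m) {p q : α × α} (hp : p ∈ m) (hq : q ∈ m) (h : p.2 = q.2) : p = q :=
  by_contra fun hne => (hm.2 p hp q hq hne).2.2.2 h

section Graph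

variable {V : Type*} [DecidableEq V] {G : SimpleGraph V}

namespace SimpleGraph.Walk

theorem disjoint_edges_toFinset_of_disjoint_support {u v u' v' : V} {p : G.Walk u v}
    {q : G.Walk u' v'} (h : ∀ x ∈ p.support, x ∉ q.support) :
    Disjoint p.edges.toFinset q.edges.toFinset := by
  refine Finset.disjoint_left.2 fun e he he' => ?_
  induction e using Sym2.ind with | _ x y =>
  exact h x (p.fst_mem_support_of_mem_edges (List.mem_toFinset.1 he))
    (q.fst_mem_support_of_mem_edges (List.mem_toFinset.1 he'))

theorem sum_length_eq_card_biUnion_edges {ι : Type*} [Fintype ι] {u v : ι → V}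
    {w : ∀ i, G.Walk (u i) (v i)} (ht : ∀ i, (w i).IsTrail)
    (hd : Pairwise (Disjoint on fun i => (w i).edges.toFinset)) :
    ∑ i, (w i).length = #(univ.biUnion fun i => (w i).edges.toFinset) := by
  rw [card_biUnion fun i _ i' _ h => hd h]
  refine sum_congr rfl fun i _ => ?_
  rw [List.toFinset_card_of_nodup (ht i).edges_nodup, (w i).length_edges]

end SimpleGraph.Walk

namespace GraphArc

variable {σ σ' τ τ' τ'' : Finset V}

theorem card_fst_s11 (h : GraphArc G σ τ) : #σ = 2 := by
  obtain ⟨u, v, huv, rfl, -⟩ := h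
  exact card_pair huv.ne

theorem card_snd_s11 (h : GraphArc G σ τ) : #τ = 1 := by
  obtain ⟨u, v, -, -, rfl | rfl⟩ := h <;> exact card_singleton _

theorem eq_or_eq_of_pair {u v : V} (h : GraphArc G {u, v} τ) : τ = {u} ∨ τ = {v} := by
  obtain ⟨a, b, -, hσ, hτ⟩ := h
  have ha : a ∈ ({u, v} : Finset V) := hσ ▸ by simp
  have hb : b ∈ ({u, v} : Finset V) := hσ ▸ by simp
  simp only [mem_insert, mem_singleton] at ha hb
  rcases hτ with rfl | rfl
  · rcases ha with rfl | rfl <;> simp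
  · rcases hb with rfl | rfl <;> simp

theorem eq_or_eq_or_eq (h : GraphArc G σ τ) (h' : GraphArc G σ τ') (h'' : GraphArc G σ τ'') :
    τ = τ' ∨ τ = τ'' ∨ τ' = τ'' := by
  obtain ⟨u, v, -, rfl, hτ⟩ := h
  rcases hτ with rfl | rfl <;> rcases eq_or_eq_of_pair h' with rfl | rfl <;>
    rcases eq_or_eq_of_pair h'' with rfl | rfl <;> simp

theorem union_eq (h : GraphArc G σ τ) (h' : GraphArc G σ τ') (hne : τ ≠ τ') : τ ∪ τ' = σ := by
  obtain ⟨u, v, -, rfl, hτ⟩ := h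
  rcases hτ with rfl | rfl <;> rcases eq_or_eq_of_pair h' with rfl | rfl
  · exact absurd rfl hne
  · exact (insert_eq u {v}).symm
  · rw [union_comm, ← insert_eq]
  · exact absurd rfl hne

theorem fst_eq_of_ne (h₁ : GraphArc G σ τ) (h₂ : GraphArc G σ τ') (h₁' : GraphArc G σ' τ)
    (h₂' : GraphArc G σ' τ') (hne : τ ≠ τ') : σ = σ' :=
  (union_eq h₁ h₂ hne).symm.trans (union_eq h₁' h₂' hne)

end GraphArc

section FaceDigraph

variable {m : Finset (Finset V × Finset V)} {a b : Finset V}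

theorem MStep.of_card_fst_eq_two (h : MStep (GraphArc G) m a b) (ha : #a = 2) :
    GraphArc G a b ∧ (a, b) ∉ m := by
  rcases h with h | ⟨h, -⟩
  · exact h
  · have := h.card_snd_s11; omega

theorem MStep.of_card_snd_eq_two (h : MStep (GraphArc G) m a b) (hb : #b = 2) :
    GraphArc G b a ∧ (b, a) ∈ m := by
  rcases h with ⟨h, -⟩ | h
  · have := h.card_snd_s11; omega
  · exact h

theorem MStep.of_card_snd_eq_one (h : MStep (GraphArc G) m a b) (hb : #b = 1) :
    GraphArc G a b ∧ (a, b) ∉ m := by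
  rcases h with h | ⟨h, -⟩
  · exact h
  · have := h.card_fst_s11; omega

theorem MStep.card_fst_eq_two_or_card_snd_eq_two (h : MStep (GraphArc G) m a b) :
    #a = 2 ∨ #b = 2 := by
  rcases h with ⟨h, -⟩ | ⟨h, -⟩
  · exact .inl h.card_fst_s11
  · exact .inr h.card_fst_s11

variable {γ : List (Finset V)}

namespace IsCycleList

theorem exists_graphArc_mem_matching_of_card_eq_two
    (hγ : IsCycleList (MStep (GraphArc G) m) γ) {σ : Finset V} (hσ : σ ∈ γ) (h2 : #σ = 2) :
    ∃ τ ∈ γ, GraphArc G σ τ ∧ (σ, τ) ∈ m := by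
  obtain ⟨τ, hτ, h⟩ := hγ.exists_mem_rel hσ
  exact ⟨τ, hτ, h.of_card_snd_eq_two h2⟩

theorem exists_graphArc_not_mem_matching_of_card_eq_one
    (hγ : IsCycleList (MStep (GraphArc G) m) γ) {τ : Finset V} (hτ : τ ∈ γ)
    (h1 : #τ = 1) : ∃ σ ∈ γ, GraphArc G σ τ ∧ (σ, τ) ∉ m := by
  obtain ⟨σ, hσ, h⟩ := hγ.exists_mem_rel hτ
  exact ⟨σ, hσ, h.of_card_snd_eq_one h1⟩

theorem exists_card_eq_two (hγ : IsCycleList (MStep (GraphArc G) m) γ) :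
    ∃ σ ∈ γ, #σ = 2 := by
  obtain ⟨x, hx⟩ := List.exists_mem_of_ne_nil γ (isCycleList_iff_cycle.1 hγ).1
  obtain ⟨y, hy, h⟩ := hγ.exists_mem_rel hx
  rcases h.card_fst_eq_two_or_card_snd_eq_two with h2 | h2
  · exact ⟨y, hy, h2⟩
  · exact ⟨x, hx, h2⟩

theorem three_le_card_filter_fst_mem (hγ : IsCycleList (MStep (GraphArc G) m) γ) :
    3 ≤ #{p ∈ m | p.1 ∈ γ} := by
  obtain ⟨σ₁, hσ₁, h₁⟩ := hγ.exists_card_eq_two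
  obtain ⟨τ₁, hτ₁, hA₁, hm₁⟩ := hγ.exists_graphArc_mem_matching_of_card_eq_two hσ₁ h₁
  obtain ⟨σ₂, hσ₂, hA₂₁, hn₂₁⟩ :=
    hγ.exists_graphArc_not_mem_matching_of_card_eq_one hτ₁ hA₁.card_snd_s11
  obtain ⟨τ₂, hτ₂, hA₂, hm₂⟩ :=
    hγ.exists_graphArc_mem_matching_of_card_eq_two hσ₂ hA₂₁.card_fst_s11
  obtain ⟨σ₃, hσ₃, hA₃₂, hn₃₂⟩ :=
    hγ.exists_graphArc_not_mem_matching_of_card_eq_one hτ₂ hA₂.card_snd_s11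
  obtain ⟨τ₃, -, -, hm₃⟩ := hγ.exists_graphArc_mem_matching_of_card_eq_two hσ₃ hA₃₂.card_fst_s11
  have h₁₂ : σ₁ ≠ σ₂ := by rintro rfl; exact hn₂₁ hm₁
  have h₂₃ : σ₂ ≠ σ₃ := by rintro rfl; exact hn₃₂ hm₂
  have h₁₃ : σ₁ ≠ σ₃ := by
    rintro rfl
    have hτ : τ₁ ≠ τ₂ := by rintro rfl; exact hn₂₁ hm₂
    exact h₁₂ (hA₁.fst_eq_of_ne hA₃₂ hA₂₁ hA₂ hτ)
  refine two_lt_card_iff.2 ⟨(σ₁, τ₁), (σ₂, τ₂), (σ₃, τ₃), mem_filter.2 ⟨hm₁, hσ₁⟩,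
    mem_filter.2 ⟨hm₂, hσ₂⟩, mem_filter.2 ⟨hm₃, hσ₃⟩, ?_, ?_, ?_⟩ <;>
  exact ne_of_apply_ne Prod.fst ‹_›

theorem mStep_unique (hm : IsMatching (GraphArc G) m)
    (hγ : IsCycleList (MStep (GraphArc G) m) γ) :
    ∀ a ∈ γ, ∀ b c, MStep (GraphArc G) m a b → MStep (GraphArc G) m a c → b = c := by
  intro a ha b c hb hc
  by_cases ha₂ : #a = 2
  · obtain ⟨τ, -, hτ, hmτ⟩ := hγ.exists_graphArc_mem_matching_of_card_eq_two ha ha₂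
    obtain ⟨hb, hbm⟩ := hb.of_card_fst_eq_two ha₂
    obtain ⟨hc, hcm⟩ := hc.of_card_fst_eq_two ha₂
    rcases hb.eq_or_eq_or_eq hc hτ with h | rfl | rfl
    · exact h
    · exact absurd hmτ hbm
    · exact absurd hmτ hcm
  · have hb := hb.of_card_snd_eq_two (hb.card_fst_eq_two_or_card_snd_eq_two.resolve_left ha₂)
    have hc := hc.of_card_snd_eq_two (hc.card_fst_eq_two_or_card_snd_eq_two.resolve_left ha₂)
    exact congrArg Prod.fst (hm.eq_of_snd_eq hb.2 hc.2 rfl)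

end IsCycleList

theorem three_mul_numCycles_le_card (hm : IsMatching (GraphArc G) m) :
    3 * numCycles (GraphArc G) m ≤ #m := by
  -- `numCycles` counts rotation classes of lists, which are exactly the elements of `Cycle`
  change 3 * (((↑) : List (Finset V) → Cycle (Finset V)) '' cyclesOf (GraphArc G) m).ncard ≤ #m
  refine mul_ncard_le_card_of_pairwiseDisjoint
    (S := fun q : Cycle (Finset V) => {p ∈ m | p.1 ∈ q}) three_pos ?_
    (fun _ _ => filter_subset _ _) ?_
  · rintro _ ⟨γ, hγ, rfl⟩
    exact hγ.three_le_card_filter_fst_mem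
  · rintro _ ⟨γ, hγ, rfl⟩ _ ⟨γ', hγ', rfl⟩ hne
    exact disjoint_filter.2 fun p _ h h' =>
      hne (Quotient.sound (hγ.isRotated_of_mem_s11 (hγ.mStep_unique hm) hγ' h h'))

end FaceDigraph

theorem card_le_card_of_forall_mem_cyclesOf {m : Finset (Finset V × Finset V)}
    {E : Finset (Finset V)} (hE : ∀ σ ∈ E, #σ = 2 ∧ ∃ γ ∈ cyclesOf (GraphArc G) m, σ ∈ γ) :
    #E ≤ #m :=
  calc #E ≤ #(m.image Prod.fst) := card_le_card fun σ hσ => by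
        obtain ⟨h₂, γ, hγ, hσγ⟩ := hE σ hσ
        obtain ⟨τ, -, -, hτ⟩ := IsCycleList.exists_graphArc_mem_matching_of_card_eq_two hγ hσγ h₂
        exact mem_image_of_mem Prod.fst hτ
    _ ≤ #m := card_image_le

end Graph

theorem matching_card_lower_bound_general {V : Type*} [DecidableEq V]
    (G : SimpleGraph V)
    (m : Finset (Finset V × Finset V))
    (j : ℕ) (v : Fin j → V) (w : ∀ i, G.Walk (v i) (v i))
    (hc : ∀ i, (w i).IsCycle)
    (hd : ∀ i i', i ≠ i' → ∀ x : V, x ∈ (w i).support → x ∉ (w i').support)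
    (hproj : ∀ i, ∃ γ ∈ cyclesOf (GraphArc G) m,
        ∀ x y : V, x ≠ y → (({x, y} : Finset V) ∈ γ ↔ s(x, y) ∈ (w i).edges)) :
    (∑ i, (w i).length) ≤ m.card ∧
    ∀ m' : Finset (Finset V × Finset V), IsMatching (GraphArc G) m' →
      3 * numCycles (GraphArc G) m' ≤ m'.card := by
  refine ⟨?_, fun m' hm' => three_mul_numCycles_le_card hm'⟩
  rw [SimpleGraph.Walk.sum_length_eq_card_biUnion_edges (fun i => (hc i).isTrail)
      fun i i' h => SimpleGraph.Walk.disjoint_edges_toFinset_of_disjoint_support (hd i i' h),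
    ← card_image_of_injective _ Sym2.toFinset_injective]
  refine card_le_card_of_forall_mem_cyclesOf (G := G) fun σ hσ => ?_
  obtain ⟨e, he, rfl⟩ := mem_image.1 hσ
  obtain ⟨i, -, he⟩ := mem_biUnion.1 he
  obtain ⟨γ, hγ, hγi⟩ := hproj i
  induction e using Sym2.ind with | _ x y =>
  have hxy : x ≠ y := ((w i).adj_of_mem_edges (List.mem_toFinset.1 he)).ne
  rw [Sym2.toFinset_mk_eq]
  exact ⟨card_pair hxy, γ, hγ, (hγi x y hxy).2 (List.mem_toFinset.1 he)⟩

/-- if the oriented cycles induced by a matching `m` on `F(G)` project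
to the pairwise vertex-disjoint cycles `γ_1, …, γ_j` of `G`, then `m` has at least
`ℓ(γ_1) + ⋯ + ℓ(γ_j)` arcs.  In particular (cycles of a simple graph having length
at least 3) every matching `m` on `F(G)` has at least `3 · J(m)` arcs, i.e. the
simplices of `M(G)` in filtration degree `j` have dimension at least `3j − 1`. -/
theorem matching_card_lower_bound {V : Type*} [Fintype V] [DecidableEq V]
    (G : SimpleGraph V)
    (m : Finset (Finset V × Finset V)) (hm : IsMatching (GraphArc G) m)
    (j : ℕ) (v : Fin j → V) (w : ∀ i, G.Walk (v i) (v i))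
    (hc : ∀ i, (w i).IsCycle)
    (hd : ∀ i i', i ≠ i' → ∀ x : V, x ∈ (w i).support → x ∉ (w i').support)
    (hproj : ∀ i, ∃ γ ∈ cyclesOf (GraphArc G) m,
        ∀ x y : V, x ≠ y → (({x, y} : Finset V) ∈ γ ↔ s(x, y) ∈ (w i).edges)) :
    (∑ i, (w i).length) ≤ m.card ∧
    ∀ m' : Finset (Finset V × Finset V), IsMatching (GraphArc G) m' →
      3 * numCycles (GraphArc G) m' ≤ m'.card :=
  matching_card_lower_bound_general G m j v w hc hd hproj
end

section
/- Let P be a pseudo-tree, i.e., a finite connected simple graph containing exactly one cycle (equivalently, a connected graph with |E(P)| = |V(P)|). Then the barycentric subdivision B(P) of P has exactly two perfect matchings; equivalently, there are exactly two matchings on the face poset F(P) that cover every vertex of F(P). -/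
/-!
A perfect matching of `B(P)` pairs each vertex `v` with an edge `{v, h v}`, distinct vertices with
distinct edges; as `|E| = |V|`, every edge is then used. So perfect matchings are the same as maps
`h` choosing a neighbour of every vertex such that no edge is chosen twice. Removing a leaf does not
change the number of such choices (a leaf must choose its only edge), and once no leaves are left
the pseudo-tree is a cycle, where the choices are the two orientations.
-/

open Finset

namespace SimpleGraph

variable {V : Type*}

/-- `h` lets every vertex `v` choose the edge `{v, h v}`; the second condition says that no edge is
chosen by both of its endpoints. -/
structure IsEdgeChoice (G : SimpleGraph V) (h : V → V) : Prop where
  adj : ∀ v, G.Adj v (h v)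
  apply_apply_ne : ∀ v, h (h v) ≠ v

lemma IsEdgeChoice.of_leftInverse {G : SimpleGraph V} {h g : V → V} (hh : G.IsEdgeChoice h)
    (hhg : Function.LeftInverse h g) : G.IsEdgeChoice g := by
  refine ⟨fun v => ?_, fun v hv => hh.apply_apply_ne v ?_⟩
  · simpa only [hhg v] using (hh.adj (g v)).symm
  · have hgv : h v = g v := by simpa only [hhg (g v)] using (congrArg h hv).symm
    rw [hgv, hhg]

lemma IsEdgeChoice.pair_injective [DecidableEq V] {G : SimpleGraph V} {h : V → V}
    (hh : G.IsEdgeChoice h) :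
    Function.Injective fun v => ({v, h v} : Finset V) := by
  intro u w huw
  rw [← coe_inj, coe_pair, coe_pair, Set.pair_eq_pair_iff] at huw
  rcases huw with ⟨rfl, -⟩ | ⟨rfl, hwu⟩
  · rfl
  · exact absurd hwu (hh.apply_apply_ne w)

lemma Reachable.mem_of_forall_adj_mem {G : SimpleGraph V} {s : Set V}
    (hs : ∀ x y, G.Adj x y → x ∈ s → y ∈ s) {u w : V} (huw : G.Reachable u w) (hu : u ∈ s) :
    w ∈ s := by
  obtain ⟨p⟩ := huw
  induction p with
  | nil => exact hu
  | cons hadj _ ih => exact ih (hs _ _ hadj hu)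

lemma neighborFinset_eq_pair_of_degree_eq_two [DecidableEq V] {G : SimpleGraph V} {v x y : V}
    [Fintype (G.neighborSet v)] (hdeg : G.degree v = 2) (hx : G.Adj v x) (hy : G.Adj v y)
    (hxy : x ≠ y) : G.neighborFinset v = {x, y} :=
  (eq_of_subset_of_card_le (by simp [insert_subset_iff, hx, hy])
    (by rw [card_neighborFinset_eq_degree, hdeg, card_pair hxy])).symm

section Leaf

variable {G : SimpleGraph V} {h : V → V} {u v : V} [Fintype (G.neighborSet v)]

lemma IsEdgeChoice.apply_eq_of_degree_eq_one (hh : G.IsEdgeChoice h) (hv : G.degree v = 1)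
    (hvu : G.Adj v u) : h v = u :=
  (degree_eq_one_iff_existsUnique_adj.mp hv).unique (hh.adj v) hvu

lemma IsEdgeChoice.apply_ne_of_degree_eq_one (hh : G.IsEdgeChoice h) (hv : G.degree v = 1)
    (x : V) : h x ≠ v := by
  intro hxv
  have hvx : h v = x := hh.apply_eq_of_degree_eq_one hv (hxv ▸ (hh.adj x).symm)
  exact hh.apply_apply_ne x (by rw [hxv, hvx])

/-- The leaf `v` has to choose its only edge, so edge choices of `G` and of `G - v` correspond by
restriction. -/
lemma ncard_isEdgeChoice_induce_compl_singleton (hv : G.degree v = 1) (hvu : G.Adj v u) :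
    {h | G.IsEdgeChoice h}.ncard = {h | (G.induce {v}ᶜ).IsEdgeChoice h}.ncard := by
  classical
  have hu : u ∈ ({v}ᶜ : Set V) := hvu.ne'
  rw [← Nat.card_coe_set_eq, ← Nat.card_coe_set_eq]
  refine Nat.card_congr
    { toFun := fun h => ⟨fun x => ⟨h.1 x, h.2.apply_ne_of_degree_eq_one hv x⟩, ?_⟩
      invFun := fun g => ⟨fun x => if hx : x = v then u else g.1 ⟨x, hx⟩, ?_⟩
      left_inv := fun h => ?_
      right_inv := fun g => Subtype.ext (funext fun x => Subtype.ext (dif_neg x.2)) }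
  · exact ⟨fun x => h.2.adj x, fun x hx => h.2.apply_apply_ne x (congrArg Subtype.val hx)⟩
  · refine ⟨fun x => ?_, fun x => ?_⟩
    · by_cases hx : x = v
      · simpa [hx] using hvu
      · simpa [hx] using g.2.adj ⟨x, hx⟩
    · by_cases hx : x = v
      · have hgu := (g.1 ⟨u, hu⟩).2
        simp only [hx, dite_true, hvu.ne', dite_false]
        exact hgu
      · have hgx := (g.1 ⟨x, hx⟩).2
        simp only [hx, dite_false, Set.mem_compl_singleton_iff.mp hgx]
        exact fun e => g.2.apply_apply_ne ⟨x, hx⟩ (Subtype.ext e)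
  · ext x
    by_cases hx : x = v
    · simp [hx, h.2.apply_eq_of_degree_eq_one hv hvu]
    · simp [hx]

end Leaf

section TwoRegular

variable [Fintype V] [DecidableEq V] {G : SimpleGraph V} [DecidableRel G.Adj] {h g : V → V}

/-- Hall's condition for choosing distinct incident edges holds by double counting: a set `s` of
vertices meets at least `2 * #s` edge-ends, and each edge has at most two ends in `s`. -/
lemma exists_isEdgeChoice_of_two_le_degree (hdeg : ∀ v, 2 ≤ G.degree v) :
    ∃ h, G.IsEdgeChoice h := by
  obtain ⟨f, hf_inj, hf_mem⟩ :=
    (all_card_le_biUnion_card_iff_exists_injective fun v => G.incidenceFinset v).mp fun s => by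
      have := card_mul_le_card_mul (fun v (e : Sym2 V) => v ∈ e) (m := 2) (n := 2)
        (s := s) (t := s.biUnion fun v => G.incidenceFinset v) (fun v hv => ?_) (fun e _ => ?_)
      · omega
      · calc 2 ≤ G.degree v := hdeg v
          _ = #(G.incidenceFinset v) := (card_incidenceFinset_eq_degree G v).symm
          _ ≤ _ := card_le_card fun e he => mem_filter.mpr
            ⟨mem_biUnion.mpr ⟨v, hv, he⟩, ((G.mem_incidenceFinset v e).mp he).2⟩
      · calc #(s.bipartiteBelow _ e) ≤ #e.toFinset :=
              card_le_card fun v hv => Sym2.mem_toFinset.mpr (mem_filter.mp hv).2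
          _ ≤ 2 := by rw [Sym2.card_toFinset]; split_ifs <;> omega
  have hf v : f v ∈ G.edgeSet ∧ v ∈ f v := (G.mem_incidenceFinset v _).mp (hf_mem v)
  obtain ⟨h, hfh⟩ : ∃ h : V → V, ∀ v, s(v, h v) = f v :=
    ⟨fun v => Sym2.Mem.other (hf v).2, fun v => Sym2.other_spec _⟩
  have hadj v : G.Adj v (h v) := by rw [← G.mem_edgeSet, hfh]; exact (hf v).1
  refine ⟨h, hadj, fun v hv => (hadj v).ne (hf_inj ?_)⟩
  rw [← hfh, ← hfh, hv, Sym2.eq_swap]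

lemma IsEdgeChoice.injective_of_degree_eq_two (hh : G.IsEdgeChoice h)
    (hdeg : ∀ v, G.degree v = 2) : Function.Injective h := by
  intro a b hab
  have hb : b ∈ G.neighborFinset (h a) := by
    rw [mem_neighborFinset, hab]; exact (hh.adj b).symm
  rw [neighborFinset_eq_pair_of_degree_eq_two (hdeg _) (hh.adj a).symm (hh.adj (h a))
    (hh.apply_apply_ne a).symm, mem_insert, mem_singleton, hab] at hb
  exact (hb.resolve_right fun e => hh.apply_apply_ne b e.symm).symm

lemma IsEdgeChoice.neighborFinset_apply (hh : G.IsEdgeChoice h) (hdeg : ∀ v, G.degree v = 2)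
    (u : V) : G.neighborFinset (h u) = {u, h (h u)} :=
  neighborFinset_eq_pair_of_degree_eq_two (hdeg _) (hh.adj u).symm (hh.adj (h u))
    (hh.apply_apply_ne u).symm

/-- On a connected cycle an edge choice either runs forwards or backwards along `h`: the set where
`g` agrees with `h` is mapped into itself by `h`, hence (being finite) onto itself, hence is closed
under adjacency. -/
lemma IsEdgeChoice.eq_or_leftInverse (hh : G.IsEdgeChoice h) (hg : G.IsEdgeChoice g)
    (hconn : G.Connected) (hdeg : ∀ v, G.degree v = 2) : g = h ∨ Function.LeftInverse h g := by
  have hinj := hh.injective_of_degree_eq_two hdeg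
  have hsurj : Function.Surjective h := Finite.injective_iff_surjective.mp hinj
  have hnext u : g (h u) = u ∨ g (h u) = h (h u) := by
    have := (G.mem_neighborFinset _ _).mpr (hg.adj (h u))
    rwa [hh.neighborFinset_apply hdeg, mem_insert, mem_singleton] at this
  set S := {u | g u = h u}
  have hmaps : Set.MapsTo h S S := fun u (hu : g u = h u) =>
    (hnext u).resolve_left fun e => hg.apply_apply_ne u (by rw [hu, e])
  have hsurjOn : Set.SurjOn h S S :=
    ((Set.toFinite S).injOn_iff_bijOn_of_mapsTo hmaps |>.mp hinj.injOn).surjOn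
  have hclosed x y (hxy : G.Adj x y) (hx : x ∈ S) : y ∈ S := by
    obtain ⟨u, rfl⟩ := hsurj x
    have hy : y ∈ G.neighborFinset (h u) := (G.mem_neighborFinset _ _).mpr hxy
    rw [hh.neighborFinset_apply hdeg, mem_insert, mem_singleton] at hy
    rcases hy with rfl | rfl
    · obtain ⟨w, hw, hwu⟩ := hsurjOn hx
      exact hinj hwu ▸ hw
    · exact hmaps hx
  rcases S.eq_empty_or_nonempty with hS | ⟨x, hx⟩
  · refine .inr fun v => ?_
    obtain ⟨u, rfl⟩ := hsurj v
    rw [(hnext u).resolve_right (Set.eq_empty_iff_forall_notMem.mp hS (h u))]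
  · exact .inl (funext fun y => (hconn.preconnected x y).mem_of_forall_adj_mem hclosed hx)

lemma ncard_isEdgeChoice_of_degree_eq_two (hconn : G.Connected) (hdeg : ∀ v, G.degree v = 2) :
    {h | G.IsEdgeChoice h}.ncard = 2 := by
  obtain ⟨h, hh⟩ := exists_isEdgeChoice_of_two_le_degree fun v => (hdeg v).ge
  have hinj := hh.injective_of_degree_eq_two hdeg
  have hsurj : Function.Surjective h := Finite.injective_iff_surjective.mp hinj
  have hinv : Function.LeftInverse h (Function.surjInv hsurj) := Function.rightInverse_surjInv _
  refine Set.ncard_eq_two.mpr ⟨h, Function.surjInv hsurj, fun e => ?_, ?_⟩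
  · obtain ⟨v⟩ := hconn.nonempty
    exact hh.apply_apply_ne v (by nth_rw 2 [e]; exact hinv v)
  ext g
  refine ⟨fun hg => ?_, ?_⟩
  · rcases hh.eq_or_leftInverse hg hconn hdeg with rfl | hhg
    · exact .inl rfl
    · exact .inr (funext fun v => hinj ((hhg v).trans (hinv v).symm))
  · rintro (rfl | rfl)
    exacts [hh, hh.of_leftInverse hinv]

end TwoRegular

lemma degree_eq_two_of_forall_degree_ne_one [Fintype V] {G : SimpleGraph V}
    [DecidableRel G.Adj] (hconn : G.Connected) (hcard : #G.edgeFinset = Fintype.card V)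
    (hleaf : ∀ v, G.degree v ≠ 1) (v : V) : G.degree v = 2 := by
  have : Nontrivial V := by
    rw [← Fintype.one_lt_card_iff_nontrivial]
    by_contra! hV
    have hV0 : 0 < Fintype.card V := Fintype.card_pos_iff.mpr hconn.nonempty
    have := G.card_edgeFinset_le_card_choose_two
    rw [hcard, Nat.choose_eq_zero_of_lt (by omega)] at this
    omega
  have hpos := hconn.preconnected.degree_pos_of_nontrivial
  have hge w : 2 ≤ G.degree w := by have := hpos w; have := hleaf w; omega
  have hsum : ∑ _w : V, 2 = ∑ w, G.degree w := by
    rw [sum_degrees_eq_twice_card_edges, hcard, sum_const, card_univ, smul_eq_mul, mul_comm]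
  exact ((sum_eq_sum_iff_of_le fun w _ => hge w).mp hsum v (mem_univ v)).symm

theorem ncard_isEdgeChoice_of_connected [Fintype V] [DecidableEq V] {G : SimpleGraph V}
    [DecidableRel G.Adj] (hconn : G.Connected) (hcard : #G.edgeFinset = Fintype.card V) :
    {h | G.IsEdgeChoice h}.ncard = 2 := by
  induction hn : Fintype.card V using Nat.strong_induction_on generalizing V with
  | _ n ih =>
  by_cases hleaf : ∃ v, G.degree v = 1
  · obtain ⟨v, hv⟩ := hleaf
    obtain ⟨u, hvu, -⟩ := degree_eq_one_iff_existsUnique_adj.mp hv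
    have hn0 : 0 < n := (Fintype.card_pos_iff (α := V)).mpr ⟨v⟩ |>.trans_eq hn
    have hcard' : Fintype.card ↥({v}ᶜ : Set V) = n - 1 := by simp [filter_ne', hn]
    rw [ncard_isEdgeChoice_induce_compl_singleton hv hvu]
    refine ih (n - 1) (by omega) (hconn.induce_compl_singleton_of_degree_eq_one hv) ?_ hcard'
    rw [card_edgeFinset_induce_compl_singleton, card_edgeFinset_deleteIncidenceSet, hv, hcard,
      hcard', hn]
  · exact ncard_isEdgeChoice_of_degree_eq_two hconn
      (degree_eq_two_of_forall_degree_ne_one hconn hcard (not_exists.mp hleaf))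

end SimpleGraph

open SimpleGraph

section FaceMatching

variable {V : Type*} [DecidableEq V]

lemma graphArc_iff {G : SimpleGraph V} {σ τ : Finset V} :
    GraphArc G σ τ ↔ ∃ v w, G.Adj v w ∧ σ = {v, w} ∧ τ = {v} := by
  constructor
  · rintro ⟨u, w, huw, rfl, rfl | rfl⟩
    exacts [⟨u, w, huw, rfl, rfl⟩, ⟨w, u, huw.symm, pair_comm u w, rfl⟩]
  · rintro ⟨v, w, hvw, rfl, rfl⟩
    exact ⟨v, w, hvw, rfl, .inl rfl⟩

def IsPerfectFaceMatching (G : SimpleGraph V) (m : Finset (Finset V × Finset V)) : Prop :=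
  IsMatching (GraphArc G) m ∧
    ∀ σ : Finset V, ((∃ x : V, σ = {x}) ∨ (∃ x y : V, G.Adj x y ∧ σ = {x, y})) →
      ∃ p ∈ m, p.1 = σ ∨ p.2 = σ

def faceMatchingOf [Fintype V] (h : V → V) : Finset (Finset V × Finset V) :=
  univ.image fun v => ({v, h v}, {v})

variable [Fintype V] {G : SimpleGraph V} {h : V → V}

lemma mem_faceMatchingOf {p : Finset V × Finset V} :
    p ∈ faceMatchingOf h ↔ ∃ v, (({v, h v}, {v}) : Finset V × Finset V) = p := by
  simp [faceMatchingOf]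

/-- The `#V` chosen edges are distinct, so with `#E = #V` they are all the edges. -/
lemma SimpleGraph.IsEdgeChoice.exists_pair_eq [DecidableRel G.Adj] (hh : G.IsEdgeChoice h)
    (hcard : #G.edgeFinset = Fintype.card V) {x y : V} (hxy : G.Adj x y) :
    ∃ v, ({v, h v} : Finset V) = {x, y} := by
  have hsub : univ.image (fun v => s(v, h v)) ⊆ G.edgeFinset := by
    simpa [subset_iff] using hh.adj
  have hinj : Function.Injective fun v => s(v, h v) := fun u w huw =>
    hh.pair_injective (by simpa [Sym2.toFinset_mk_eq] using congrArg Sym2.toFinset huw)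
  have heq := eq_of_subset_of_card_le hsub
    (by rw [card_image_of_injective _ hinj, hcard, card_univ])
  obtain ⟨v, -, hv⟩ := mem_image.mp (heq ▸ G.mem_edgeFinset.mpr (G.mem_edgeSet.mpr hxy))
  exact ⟨v, by simpa [Sym2.toFinset_mk_eq] using congrArg Sym2.toFinset hv⟩

lemma SimpleGraph.IsEdgeChoice.isPerfectFaceMatching [DecidableRel G.Adj] (hh : G.IsEdgeChoice h)
    (hcard : #G.edgeFinset = Fintype.card V) : IsPerfectFaceMatching G (faceMatchingOf h) := by
  have hcard_pair v : #({v, h v} : Finset V) = 2 := card_pair (hh.adj v).ne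
  refine ⟨⟨?_, ?_⟩, ?_⟩
  · simp only [mem_faceMatchingOf, forall_exists_index]
    rintro _ v rfl
    exact graphArc_iff.mpr ⟨v, h v, hh.adj v, rfl, rfl⟩
  · simp only [mem_faceMatchingOf, forall_exists_index]
    rintro _ u rfl _ w rfl hne
    have huw : u ≠ w := fun e => hne (e ▸ rfl)
    refine ⟨fun e => huw (hh.pair_injective e), fun e => ?_, fun e => ?_, fun e => huw ?_⟩
    · simpa [hcard_pair] using congrArg card e
    · simpa [hcard_pair] using congrArg card e
    · exact singleton_injective e
  · rintro σ (⟨x, rfl⟩ | ⟨x, y, hxy, rfl⟩)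
    · exact ⟨_, mem_faceMatchingOf.mpr ⟨x, rfl⟩, .inr rfl⟩
    · obtain ⟨v, hv⟩ := hh.exists_pair_eq hcard hxy
      exact ⟨_, mem_faceMatchingOf.mpr ⟨v, rfl⟩, .inl hv⟩

lemma IsPerfectFaceMatching.exists_isEdgeChoice {m : Finset (Finset V × Finset V)}
    (hm : IsPerfectFaceMatching G m) : ∃ h, G.IsEdgeChoice h ∧ faceMatchingOf h = m := by
  obtain ⟨⟨harc, hdisj⟩, hcov⟩ := hm
  have hchoice v : ∃ w, G.Adj v w ∧ (({v, w}, {v}) : Finset V × Finset V) ∈ m := by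
    obtain ⟨p, hp, hpv⟩ := hcov {v} (.inl ⟨v, rfl⟩)
    obtain ⟨a, w, haw, hp1, hp2⟩ := graphArc_iff.mp (harc p hp)
    rcases hpv with hpv | hpv
    · have := congrArg card (hp1.symm.trans hpv)
      simp [card_pair haw.ne] at this
    · obtain rfl : a = v := singleton_injective (hp2.symm.trans hpv)
      exact ⟨w, haw, hp1 ▸ hp2 ▸ hp⟩
  choose h hadj hmem using hchoice
  have huniq p (hp : p ∈ m) v (hpv : p.2 = {v}) : p = ({v, h v}, {v}) := by
    by_contra hne
    exact (hdisj p hp _ (hmem v) hne).2.2.2 hpv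
  refine ⟨h, ⟨hadj, fun v hv => ?_⟩, ?_⟩
  · have hne : (({v, h v}, {v}) : Finset V × Finset V) ≠ ({h v, h (h v)}, {h v}) :=
      fun e => (hadj v).ne (singleton_injective (congrArg Prod.snd e))
    exact (hdisj _ (hmem v) _ (hmem (h v)) hne).1 (by rw [hv, pair_comm])
  · ext p
    refine ⟨?_, fun hp => ?_⟩
    · rw [mem_faceMatchingOf]
      rintro ⟨v, rfl⟩
      exact hmem v
    · obtain ⟨v, w, -, -, hp2⟩ := graphArc_iff.mp (harc p hp)
      exact mem_faceMatchingOf.mpr ⟨v, (huniq p hp v hp2).symm⟩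

lemma faceMatchingOf_injOn : Set.InjOn faceMatchingOf {h : V → V | G.IsEdgeChoice h} := by
  intro h hh g hg hhg
  funext v
  obtain ⟨w, hw⟩ := mem_faceMatchingOf.mp (hhg ▸ mem_faceMatchingOf.mpr ⟨v, rfl⟩)
  obtain ⟨hpair, hwv⟩ := Prod.mk.inj hw
  obtain rfl := singleton_injective hwv
  have hgw : g w ∈ ({w, h w} : Finset V) := by rw [← hpair]; simp
  simpa [(hg.adj w).ne', eq_comm] using hgw

lemma setOf_isPerfectFaceMatching_eq_image [DecidableRel G.Adj]
    (hcard : #G.edgeFinset = Fintype.card V) :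
    {m | IsPerfectFaceMatching G m} = faceMatchingOf '' {h | G.IsEdgeChoice h} := by
  ext m
  refine ⟨fun hm => ?_, ?_⟩
  · obtain ⟨h, hh, rfl⟩ := hm.exists_isEdgeChoice
    exact ⟨h, hh, rfl⟩
  · rintro ⟨h, hh, rfl⟩
    exact hh.isPerfectFaceMatching hcard

end FaceMatching

/-- a pseudo-tree `P` (a finite connected simple graph with
`|E(P)| = |V(P)|`, i.e. containing exactly one cycle) has exactly two perfect
matchings on its barycentric subdivision `B(P) = F(P)`: exactly two matchings on the
face poset cover every face of `P`. -/
theorem pseudo_tree_two_perfect_matchings {V : Type*} [Fintype V] [DecidableEq V]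
    (P : SimpleGraph V) [DecidableRel P.Adj]
    (hconn : P.Connected) (hcard : P.edgeFinset.card = Fintype.card V) :
    {m : Finset (Finset V × Finset V) | IsMatching (GraphArc P) m ∧
      ∀ σ : Finset V, ((∃ x : V, σ = {x}) ∨ (∃ x y : V, P.Adj x y ∧ σ = {x, y})) →
        ∃ p ∈ m, p.1 = σ ∨ p.2 = σ}.ncard = 2 := by
  change {m | IsPerfectFaceMatching P m}.ncard = 2
  rw [setOf_isPerfectFaceMatching_eq_image hcard, faceMatchingOf_injOn.ncard_image]
  exact ncard_isEdgeChoice_of_connected hconn hcard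
end
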